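/- Let ℓ be a positive integer, f a real-valued function on B_ℓ, and λ > 0. Let f′ be the function on B_ℓ equal to f(x) when |f(x)| > λ and equal to 0 otherwise, let A_{2λ} = {x ∈ B_ℓ : M(f)(x) > 2λ}, and write |A_{2λ}| for 2^{−ℓ} times the number of elements of A_{2λ}. Then λ · |A_{2λ}| ≤ ‖f′‖_1. -/

import Mathlib

/-!
Split `f = f' + (f - f')` with `|f - f'| ≤ λ`. Every average of `f - f'` is at most `λ` in
absolute value, so `M f > 2λ` forces `M f' > λ`, and it remains to prove the weak (1,1) bound
`λ · #{M g > λ} ≤ Σ |g|`. Stop each `x` with `M g(x) > λ` at the first level `k` where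
`|E_k g(x)| > λ`; the stopping time is constant on the cylinder `N_k(x)`, so these cylinders
partition `{M g > λ}`, and on each of them the average of `|g|` exceeds `λ`.
-/

open Finset

/-- The value `±1 ∈ ℝ` attached to a coordinate of a point of `B_ℓ = {−1,1}^ℓ`,
modelled as `Fin ℓ → Bool`.  `sgn (x j)` is the Rademacher function at `x`. -/
def sgn (b : Bool) : ℝ := if b then 1 else -1

/-- `E_k(f)(x) = 2^{−ℓ+k} Σ_{y ∈ N_k(x)} f(y)`, the average of `f` over
`N_k(x) = {y ∈ B_ℓ : y_j = x_j for all j ≤ k}` (indices `0,…,k−1` in `Fin ℓ`). -/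
noncomputable def condExpB (ℓ k : ℕ) (f : (Fin ℓ → Bool) → ℝ) (x : Fin ℓ → Bool) : ℝ :=
  (2:ℝ) ^ ((k:ℤ) - (ℓ:ℤ)) *
    ∑ y ∈ Finset.univ.filter (fun y : Fin ℓ → Bool => ∀ j : Fin ℓ, (j:ℕ) < k → y j = x j), f y


/-- The dyadic martingale maximal function `M(f)(x) = max_{0 ≤ k ≤ ℓ} |E_k(f)(x)|`. -/
noncomputable def maxFn (ℓ : ℕ) (f : (Fin ℓ → Bool) → ℝ) (x : Fin ℓ → Bool) : ℝ :=
  (Finset.range (ℓ + 1)).sup' (Finset.nonempty_range_iff.mpr (Nat.succ_ne_zero ℓ))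
    (fun k => |condExpB ℓ k f x|)

/-- The paper's `N_k(x)`. -/
def cylinder {ℓ : ℕ} (k : ℕ) (x : Fin ℓ → Bool) : Finset (Fin ℓ → Bool) :=
  univ.filter fun y => ∀ j : Fin ℓ, (j : ℕ) < k → y j = x j

section Cylinder

variable {ℓ : ℕ}

theorem mem_cylinder {k : ℕ} {x y : Fin ℓ → Bool} :
    y ∈ cylinder k x ↔ ∀ j : Fin ℓ, (j : ℕ) < k → y j = x j := by
  simp [cylinder]

theorem mem_cylinder_comm {k : ℕ} {x y : Fin ℓ → Bool} :
    y ∈ cylinder k x ↔ x ∈ cylinder k y := by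
  simp only [mem_cylinder, eq_comm]

theorem cylinder_eq_of_mem {j k : ℕ} (hjk : j ≤ k) {x y : Fin ℓ → Bool}
    (hy : y ∈ cylinder k x) : cylinder j y = cylinder j x := by
  ext z
  simp only [mem_cylinder] at hy ⊢
  exact forall_congr' fun i => imp_congr_right fun hi => by rw [hy i (hi.trans_le hjk)]

theorem card_cylinder (k : ℕ) (x : Fin ℓ → Bool) : #(cylinder k x) = 2 ^ (ℓ - k) := by
  classical
  have hpi : cylinder k x =
      Fintype.piFinset fun j : Fin ℓ => if (j : ℕ) < k then {x j} else univ := by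
    ext y
    simp only [mem_cylinder, Fintype.mem_piFinset]
    refine forall_congr' fun j => ?_
    split_ifs <;> simp [*]
  have hfree : #{j : Fin ℓ | ¬ (j : ℕ) < k} = ℓ - k := by
    rw [filter_not, card_sdiff_of_subset (filter_subset _ _), Fin.card_filter_val_lt, card_univ,
      Fintype.card_fin]
    omega
  simp only [hpi, Fintype.card_piFinset, apply_ite card, card_singleton, card_univ,
    Fintype.card_bool]
  rw [prod_ite, prod_const_one, one_mul, prod_const, hfree]

theorem two_zpow_mul_card_cylinder {k : ℕ} (hk : k ≤ ℓ) (x : Fin ℓ → Bool) :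
    (2 : ℝ) ^ ((k : ℤ) - ℓ) * #(cylinder k x) = 1 := by
  rw [card_cylinder, Nat.cast_pow, Nat.cast_ofNat, ← zpow_natCast, ← zpow_add₀ two_ne_zero,
    Nat.cast_sub hk]
  simp

end Cylinder

section CondExp

variable {ℓ : ℕ}

theorem condExpB_eq (k : ℕ) (f : (Fin ℓ → Bool) → ℝ) (x : Fin ℓ → Bool) :
    condExpB ℓ k f x = (2 : ℝ) ^ ((k : ℤ) - ℓ) * ∑ y ∈ cylinder k x, f y :=
  rfl

theorem condExpB_eq_of_mem_cylinder {j k : ℕ} (hjk : j ≤ k) (f : (Fin ℓ → Bool) → ℝ)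
    {x y : Fin ℓ → Bool} (hy : y ∈ cylinder k x) : condExpB ℓ j f y = condExpB ℓ j f x := by
  rw [condExpB_eq, condExpB_eq, cylinder_eq_of_mem hjk hy]

theorem abs_condExpB_le (k : ℕ) (f : (Fin ℓ → Bool) → ℝ) (x : Fin ℓ → Bool) :
    |condExpB ℓ k f x| ≤ (2 : ℝ) ^ ((k : ℤ) - ℓ) * ∑ y ∈ cylinder k x, |f y| := by
  rw [condExpB_eq, abs_mul, abs_of_pos (by positivity)]
  gcongr
  exact abs_sum_le_sum_abs _ _

theorem abs_condExpB_sub_le {k : ℕ} (hk : k ≤ ℓ) {f g : (Fin ℓ → Bool) → ℝ} {c : ℝ}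
    (hfg : ∀ z, |f z - g z| ≤ c) (x : Fin ℓ → Bool) :
    |condExpB ℓ k f x - condExpB ℓ k g x| ≤ c := by
  have hlin : condExpB ℓ k f x - condExpB ℓ k g x = condExpB ℓ k (f - g) x := by
    simp only [condExpB_eq, Pi.sub_apply, sum_sub_distrib, mul_sub]
  calc |condExpB ℓ k f x - condExpB ℓ k g x|
      ≤ (2 : ℝ) ^ ((k : ℤ) - ℓ) * ∑ _y ∈ cylinder k x, c := by
        rw [hlin]
        refine (abs_condExpB_le k _ x).trans ?_
        gcongr with z
        exact hfg z
    _ = c := by rw [sum_const, nsmul_eq_mul, ← mul_assoc, two_zpow_mul_card_cylinder hk, one_mul]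

end CondExp

section MaxFn

variable {ℓ : ℕ}

theorem lt_maxFn_iff {f : (Fin ℓ → Bool) → ℝ} {x : Fin ℓ → Bool} {t : ℝ} :
    t < maxFn ℓ f x ↔ ∃ k ≤ ℓ, t < |condExpB ℓ k f x| := by
  simp [maxFn, lt_sup'_iff]

theorem lt_maxFn_of_abs_sub_le {f g : (Fin ℓ → Bool) → ℝ} {c t : ℝ} (hfg : ∀ z, |f z - g z| ≤ c)
    {x : Fin ℓ → Bool} (hx : c + t < maxFn ℓ f x) : t < maxFn ℓ g x := by
  obtain ⟨k, hk, hlt⟩ := lt_maxFn_iff.mp hx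
  have hsub := abs_condExpB_sub_le hk hfg x
  have hdiff := abs_sub_abs_le_abs_sub (condExpB ℓ k f x) (condExpB ℓ k g x)
  exact lt_maxFn_iff.mpr ⟨k, hk, by linarith⟩

end MaxFn

section StoppingTime

variable {ℓ : ℕ} {g : (Fin ℓ → Bool) → ℝ} {t : ℝ} {x y : Fin ℓ → Bool}

/-- Meaningful only where `t < maxFn ℓ g x`; elsewhere it is the junk value `sInf ∅ = 0`. -/
noncomputable def stoppingTime (g : (Fin ℓ → Bool) → ℝ) (t : ℝ) (x : Fin ℓ → Bool) : ℕ :=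
  sInf {k | t < |condExpB ℓ k g x|}

theorem stoppingTime_le (hx : t < maxFn ℓ g x) : stoppingTime g t x ≤ ℓ := by
  obtain ⟨k, hk, hlt⟩ := lt_maxFn_iff.mp hx
  exact (Nat.sInf_le hlt).trans hk

theorem lt_abs_condExpB_stoppingTime (hx : t < maxFn ℓ g x) :
    t < |condExpB ℓ (stoppingTime g t x) g x| := by
  obtain ⟨k, -, hlt⟩ := lt_maxFn_iff.mp hx
  exact Nat.sInf_mem (s := {k | t < |condExpB ℓ k g x|}) ⟨k, hlt⟩

theorem stoppingTime_eq_of_mem_cylinder (hx : t < maxFn ℓ g x)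
    (hy : y ∈ cylinder (stoppingTime g t x) x) :
    t < maxFn ℓ g y ∧ stoppingTime g t y = stoppingTime g t x := by
  have hty : t < |condExpB ℓ (stoppingTime g t x) g y| := by
    rw [condExpB_eq_of_mem_cylinder le_rfl g hy]
    exact lt_abs_condExpB_stoppingTime hx
  have hy' : t < maxFn ℓ g y := lt_maxFn_iff.mpr ⟨_, stoppingTime_le hx, hty⟩
  have hle : stoppingTime g t y ≤ stoppingTime g t x := Nat.sInf_le hty
  refine ⟨hy', hle.antisymm (le_of_not_gt fun hlt => ?_)⟩
  have htx : t < |condExpB ℓ (stoppingTime g t y) g x| := by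
    rw [← condExpB_eq_of_mem_cylinder hlt.le g hy]
    exact lt_abs_condExpB_stoppingTime hy'
  exact Nat.notMem_of_lt_sInf hlt htx

end StoppingTime

section WeakType

variable {ℓ : ℕ}

open Classical in
/-- Every `x` whose stopped cylinder contains `y` lies in the stopped cylinder of `y`, with the
same stopping time: the stopped cylinders are pairwise equal or disjoint. -/
theorem sum_two_zpow_stoppingTime_le_one (g : (Fin ℓ → Bool) → ℝ) (t : ℝ) (y : Fin ℓ → Bool) :
    ∑ x ∈ {x | t < maxFn ℓ g x ∧ y ∈ cylinder (stoppingTime g t x) x},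
      (2 : ℝ) ^ ((stoppingTime g t x : ℤ) - ℓ) ≤ 1 := by
  by_cases hy : t < maxFn ℓ g y
  · calc _ = ∑ x ∈ {x | t < maxFn ℓ g x ∧ y ∈ cylinder (stoppingTime g t x) x},
            (2 : ℝ) ^ ((stoppingTime g t y : ℤ) - ℓ) := by
          refine sum_congr rfl fun x hx => ?_
          obtain ⟨hxA, hyx⟩ := (mem_filter.mp hx).2
          rw [(stoppingTime_eq_of_mem_cylinder hxA hyx).2]
      _ ≤ ∑ _x ∈ cylinder (stoppingTime g t y) y, (2 : ℝ) ^ ((stoppingTime g t y : ℤ) - ℓ) := by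
          refine sum_le_sum_of_subset_of_nonneg (fun x hx => ?_) fun _ _ _ => by positivity
          obtain ⟨hxA, hyx⟩ := (mem_filter.mp hx).2
          rw [(stoppingTime_eq_of_mem_cylinder hxA hyx).2]
          exact mem_cylinder_comm.mp hyx
      _ = 1 := by
          rw [sum_const, nsmul_eq_mul, mul_comm, two_zpow_mul_card_cylinder (stoppingTime_le hy)]
  · have hempty : ({x | t < maxFn ℓ g x ∧ y ∈ cylinder (stoppingTime g t x) x} : Finset _) = ∅ :=
      filter_eq_empty_iff.mpr fun x _ hx => hy (stoppingTime_eq_of_mem_cylinder hx.1 hx.2).1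
    rw [hempty, sum_empty]
    exact zero_le_one

open Classical in
theorem mul_card_lt_maxFn_le_sum_abs (g : (Fin ℓ → Bool) → ℝ) (t : ℝ) :
    t * #{x | t < maxFn ℓ g x} ≤ ∑ y, |g y| := by
  calc t * #{x | t < maxFn ℓ g x}
      = ∑ x ∈ {x | t < maxFn ℓ g x}, t := by rw [sum_const, nsmul_eq_mul, mul_comm]
    _ ≤ ∑ x ∈ {x | t < maxFn ℓ g x}, ∑ y ∈ cylinder (stoppingTime g t x) x,
          (2 : ℝ) ^ ((stoppingTime g t x : ℤ) - ℓ) * |g y| := by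
        refine sum_le_sum fun x hx => ?_
        rw [← mul_sum]
        exact (lt_abs_condExpB_stoppingTime (mem_filter.mp hx).2).le.trans (abs_condExpB_le _ g x)
    _ = ∑ y, ∑ x ∈ {x | t < maxFn ℓ g x ∧ y ∈ cylinder (stoppingTime g t x) x},
          (2 : ℝ) ^ ((stoppingTime g t x : ℤ) - ℓ) * |g y| :=
        sum_comm' fun x y => by simp only [mem_filter, mem_univ, true_and, and_true]
    _ ≤ ∑ y, |g y| := by
        refine sum_le_sum fun y _ => ?_
        rw [← sum_mul]
        exact mul_le_of_le_one_left (abs_nonneg _) (sum_two_zpow_stoppingTime_le_one g t y)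

end WeakType

theorem stmt15_general (ℓ : ℕ) (f : (Fin ℓ → Bool) → ℝ) (lam : ℝ) (hlam : 0 < lam) :
    lam * ((2:ℝ) ^ (-(ℓ:ℤ)) * Nat.card {x : Fin ℓ → Bool // 2 * lam < maxFn ℓ f x})
      ≤ (2:ℝ) ^ (-(ℓ:ℤ)) *
        ∑ x : Fin ℓ → Bool, |if lam < |f x| then f x else 0| := by
  classical
  set f' : (Fin ℓ → Bool) → ℝ := fun x => if lam < |f x| then f x else 0
  have htrunc : ∀ z, |f z - f' z| ≤ lam := fun z => by
    by_cases hz : lam < |f z| <;> simp [f', hz, hlam.le, le_of_not_gt]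
  have hsub : ({x | 2 * lam < maxFn ℓ f x} : Finset _) ⊆ ({x | lam < maxFn ℓ f' x} : Finset _) :=
    monotone_filter_right _ fun x _ hx => lt_maxFn_of_abs_sub_le htrunc (by linarith)
  rw [Nat.card_eq_fintype_card, Fintype.card_subtype, mul_left_comm]
  gcongr
  calc lam * #{x | 2 * lam < maxFn ℓ f x}
      ≤ lam * #{x | lam < maxFn ℓ f' x} := by gcongr
    _ ≤ ∑ x, |f' x| := mul_card_lt_maxFn_le_sum_abs f' lam

/-- with `f′(x) = f(x)` when `|f(x)| > λ` and `f′(x) = 0` otherwise, and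
`A_{2λ} = {x ∈ B_ℓ : M(f)(x) > 2λ}` with `|A_{2λ}| = 2^{−ℓ} #A_{2λ}`, one has
`λ ⬝ |A_{2λ}| ≤ ‖f′‖_1 = 2^{−ℓ} Σ_x |f′(x)|`. -/
theorem stmt15 (ℓ : ℕ) (hℓ : 0 < ℓ) (f : (Fin ℓ → Bool) → ℝ) (lam : ℝ) (hlam : 0 < lam) :
    lam * ((2:ℝ) ^ (-(ℓ:ℤ)) * Nat.card {x : Fin ℓ → Bool // 2 * lam < maxFn ℓ f x})
      ≤ (2:ℝ) ^ (-(ℓ:ℤ)) *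
        ∑ x : Fin ℓ → Bool, |if lam < |f x| then f x else 0| :=
  stmt15_general ℓ f lam hlam
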